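/- arXiv:1809.02001 — 5 statements merged into one kernel-verified Lean document; each statement's English description precedes it below -/
import Mathlib

section
/- Let K be a field and let f₁, f₂ ∈ K[u,v] be nonzero homogeneous polynomials of degrees a₁ and a₂ respectively, which are relatively prime (every common divisor of f₁ and f₂ is a unit). Then for every homogeneous polynomial g ∈ K[u,v] of degree a₁ + a₂ there exist polynomials g₁, g₂ ∈ K[u,v], homogeneous of degrees a₁ and a₂ respectively (or zero), such that g = f₂·g₁ − f₁·g₂. -/
open MvPolynomial

lemma CHS_degree_two (d : Fin 2 →₀ ℕ) : d.degree = d 0 + d 1 := by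
  rw [show d.degree = ∑ i ∈ d.support, d i from rfl, Finset.sum_subset (Finset.subset_univ _)]
  · simp [Fin.sum_univ_two]
  · intro x _ hx; simpa using hx

noncomputable def CHS_equiv (n : ℕ) : {d : Fin 2 →₀ ℕ // d.degree = n} ≃ Fin (n + 1) where
  toFun d := ⟨d.1 0, by have := d.2; rw [CHS_degree_two] at this; omega⟩
  invFun i := ⟨Finsupp.single 0 i.1 + Finsupp.single 1 (n - i.1), by
    rw [CHS_degree_two]; simp [Finsupp.single_apply]; omega⟩
  left_inv d := by
    ext j
    have hd := d.2; rw [CHS_degree_two] at hd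
    fin_cases j <;> simp [Finsupp.single_apply] <;> omega
  right_inv i := by ext; simp [Finsupp.single_apply]

noncomputable instance CHS_fintype (n : ℕ) : Fintype ↑{d : Fin 2 →₀ ℕ | d.degree = n} :=
  Fintype.ofEquiv _ (CHS_equiv n).symm

noncomputable def CHS_lequiv (K : Type*) [Field K] (n : ℕ) :
    homogeneousSubmodule (Fin 2) K n ≃ₗ[K] (↑{d : Fin 2 →₀ ℕ | d.degree = n} →₀ K) :=
  (LinearEquiv.ofEq _ _ (homogeneousSubmodule_eq_finsupp_supported (Fin 2) K n)).trans
    (AddMonoidAlgebra.supportedEquivFinsupp _)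

instance CHS_findim (K : Type*) [Field K] (n : ℕ) :
    FiniteDimensional K (homogeneousSubmodule (Fin 2) K n) :=
  Module.Finite.equiv (CHS_lequiv K n).symm

lemma CHS_finrank (K : Type*) [Field K] (n : ℕ) :
    Module.finrank K (homogeneousSubmodule (Fin 2) K n) = n + 1 := by
  rw [(CHS_lequiv K n).finrank_eq, Module.finrank_finsupp_self, Fintype.card_eq_nat_card]
  exact Nat.card_eq_of_equiv_fin (CHS_equiv n)

lemma CHS_factor_const {K : Type*} [Field K] {f c : MvPolynomial (Fin 2) K} {m : ℕ}
    (hf : f.IsHomogeneous m) (hf0 : f ≠ 0) (h : (f * c).IsHomogeneous m) :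
    c = C (coeff 0 c) := by
  have key : ∀ k, k ≠ 0 → homogeneousComponent k c = 0 := by
    intro k hk
    have h1 : homogeneousComponent (m + k) (f * c) = 0 := by
      rw [homogeneousComponent_of_mem ((mem_homogeneousSubmodule _ _).mpr h)]
      rw [if_neg (by omega)]
    rw [← sum_homogeneousComponent c, Finset.mul_sum, map_sum] at h1
    have h2 : ∀ i ∈ Finset.range (c.totalDegree + 1),
        homogeneousComponent (m + k) (f * homogeneousComponent i c) =
          if i = k then f * homogeneousComponent i c else 0 := by
      intro i _
      rw [homogeneousComponent_of_mem ((mem_homogeneousSubmodule _ _).mpr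
        (hf.mul (homogeneousComponent_isHomogeneous i c)))]
      by_cases hik : i = k
      · rw [if_pos (by omega), if_pos hik]
      · rw [if_neg (by omega), if_neg hik]
    rw [Finset.sum_congr rfl h2, Finset.sum_ite_eq' _ k] at h1
    by_cases hk2 : k ∈ Finset.range (c.totalDegree + 1)
    · rw [if_pos hk2] at h1
      exact (mul_eq_zero.mp h1).resolve_left hf0
    · exact homogeneousComponent_eq_zero _ c (by simpa using hk2)
  calc c = ∑ i ∈ Finset.range (c.totalDegree + 1), homogeneousComponent i c :=
        (sum_homogeneousComponent c).symm
    _ = homogeneousComponent 0 c :=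
        Finset.sum_eq_single_of_mem 0 (by simp) fun i _ hi => key i hi
    _ = C (coeff 0 c) := homogeneousComponent_zero c

/-- If `f₁, f₂ ∈ K[u,v]` are nonzero coprime homogeneous polynomials of degrees `a₁, a₂`,
then every homogeneous polynomial `g` of degree `a₁ + a₂` can be written as
`g = f₂·g₁ − f₁·g₂` with `g₁, g₂` homogeneous of degrees `a₁, a₂` (or zero). -/
theorem coprime_homogeneous_surjective (K : Type*) [Field K] (a₁ a₂ : ℕ)
    (f₁ f₂ : MvPolynomial (Fin 2) K)
    (hf₁ : f₁ ≠ 0) (hf₂ : f₂ ≠ 0)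
    (hf₁h : f₁.IsHomogeneous a₁) (hf₂h : f₂.IsHomogeneous a₂)
    (hcop : ∀ d : MvPolynomial (Fin 2) K, d ∣ f₁ → d ∣ f₂ → IsUnit d) :
    ∀ g : MvPolynomial (Fin 2) K, g.IsHomogeneous (a₁ + a₂) →
      ∃ g₁ g₂ : MvPolynomial (Fin 2) K, g₁.IsHomogeneous a₁ ∧ g₂.IsHomogeneous a₂ ∧
        g = f₂ * g₁ - f₁ * g₂ := by
  classical
  set M₁ := homogeneousSubmodule (Fin 2) K a₁ with hM₁
  set M₂ := homogeneousSubmodule (Fin 2) K a₂ with hM₂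
  set N := homogeneousSubmodule (Fin 2) K (a₁ + a₂) with hN
  have memN : ∀ (p : M₁) (q : M₂), f₂ * (p : MvPolynomial (Fin 2) K) - f₁ * (q : _) ∈ N := by
    intro p q
    refine (mem_homogeneousSubmodule _ _).mpr ?_
    have h1 : (f₂ * (p : MvPolynomial (Fin 2) K)).IsHomogeneous (a₁ + a₂) := by
      rw [add_comm]; exact hf₂h.mul ((mem_homogeneousSubmodule _ _).mp p.2)
    exact h1.sub (hf₁h.mul ((mem_homogeneousSubmodule _ _).mp q.2))
  let φ : (M₁ × M₂) →ₗ[K] N :=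
    { toFun := fun p => ⟨f₂ * (p.1 : MvPolynomial (Fin 2) K) - f₁ * (p.2 : _), memN p.1 p.2⟩
      map_add' := by
        intro x y; refine Subtype.ext ?_; simp only [Prod.fst_add, Prod.snd_add]; push_cast; ring
      map_smul' := by
        intro c x; refine Subtype.ext ?_; push_cast
        simp [smul_eq_C_mul]; ring }
  have hker : LinearMap.ker φ ≤ Submodule.span K {((⟨f₁, hf₁h⟩, ⟨f₂, hf₂h⟩) : M₁ × M₂)} := by
    rintro ⟨g₁, g₂⟩ hx
    have heq : f₂ * (g₁ : MvPolynomial (Fin 2) K) = f₁ * (g₂ : _) := by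
      have := congrArg (Subtype.val) (LinearMap.mem_ker.mp hx)
      simpa [φ, sub_eq_zero] using this
    have hdvd : f₁ ∣ (g₁ : MvPolynomial (Fin 2) K) :=
      (show IsRelPrime f₁ f₂ from hcop).dvd_of_dvd_mul_left ⟨(g₂ : MvPolynomial (Fin 2) K), heq⟩
    obtain ⟨c, hc⟩ := hdvd
    have hch : c = C (coeff 0 c) := by
      refine CHS_factor_const hf₁h hf₁ ?_
      rw [← hc]; exact (mem_homogeneousSubmodule _ _).mp g₁.2
    set k := coeff 0 c with hk
    have hg₁ : (g₁ : MvPolynomial (Fin 2) K) = C k * f₁ := by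
      rw [hc, hch]; ring
    have hg₂ : (g₂ : MvPolynomial (Fin 2) K) = C k * f₂ := by
      have h5 : f₁ * (C k * f₂) = f₁ * (g₂ : MvPolynomial (Fin 2) K) := by
        calc f₁ * (C k * f₂) = f₂ * (C k * f₁) := by ring
          _ = f₂ * (g₁ : MvPolynomial (Fin 2) K) := by rw [hg₁]
          _ = f₁ * (g₂ : MvPolynomial (Fin 2) K) := heq
      exact (mul_left_cancel₀ hf₁ h5).symm
    refine Submodule.mem_span_singleton.mpr ⟨k, ?_⟩
    refine Prod.ext (Subtype.ext ?_) (Subtype.ext ?_)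
    · show k • f₁ = (g₁ : MvPolynomial (Fin 2) K)
      rw [hg₁, smul_eq_C_mul]
    · show k • f₂ = (g₂ : MvPolynomial (Fin 2) K)
      rw [hg₂, smul_eq_C_mul]
  have hkerrank : Module.finrank K (LinearMap.ker φ) ≤ 1 := by
    refine le_trans (Submodule.finrank_mono hker) ?_
    exact le_of_eq (finrank_span_singleton (by
      intro h
      exact hf₁ (by simpa using congrArg (fun p => (p.1 : MvPolynomial (Fin 2) K)) h)))
  have hrank := LinearMap.finrank_range_add_finrank_ker φ
  have hr₁ : Module.finrank K M₁ = a₁ + 1 := CHS_finrank K a₁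
  have hr₂ : Module.finrank K M₂ = a₂ + 1 := CHS_finrank K a₂
  rw [Module.finrank_prod, hr₁, hr₂] at hrank
  have hNrank : Module.finrank K N = a₁ + a₂ + 1 := CHS_finrank K (a₁ + a₂)
  have hrange_le : Module.finrank K (LinearMap.range φ) ≤ Module.finrank K N :=
    Submodule.finrank_le _
  have htop : LinearMap.range φ = ⊤ :=
    Submodule.eq_top_of_finrank_eq (by omega)
  intro g hg
  obtain ⟨⟨g₁, g₂⟩, hx⟩ := (LinearMap.range_eq_top.mp htop) ⟨g, (mem_homogeneousSubmodule _ _).mpr hg⟩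
  refine ⟨g₁, g₂, (mem_homogeneousSubmodule _ _).mp g₁.2, (mem_homogeneousSubmodule _ _).mp g₂.2, ?_⟩
  exact (congrArg Subtype.val hx).symm
end

section
/- Let X₁, X₂, X₃, X₄, X₅ be nonzero integers such that (X₁, X₂) ≠ (X₃X₅, X₄X₅). Then max(|X₁/(X₃X₅) − 1|, |X₂/(X₄X₅) − 1|)² · |X₃² X₄² X₅³| ≥ 1, where |·| is the usual absolute value on ℚ. -/
/-- A nonzero integer has absolute value at least 1 in `ℚ`. -/
lemma one_le_abs_ratCast (n : ℤ) (hn : n ≠ 0) : (1 : ℚ) ≤ |(n : ℚ)| := by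
  have := Int.one_le_abs hn
  rw [← Int.cast_abs]
  exact_mod_cast this

/-- Liouville bound for one coordinate: if `a ≠ c*e` then `|a/(c*e) - 1| ≥ 1/|c*e|`. -/
lemma coord_bound (a c e : ℤ) (hc : c ≠ 0) (he : e ≠ 0) (h : a ≠ c * e) :
    1 / |(c : ℚ) * (e : ℚ)| ≤ |(a : ℚ) / ((c : ℚ) * (e : ℚ)) - 1| := by
  have hce : ((c : ℚ) * (e : ℚ)) ≠ 0 := by
    exact mul_ne_zero (Int.cast_ne_zero.mpr hc) (Int.cast_ne_zero.mpr he)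
  have habs : |(c : ℚ) * (e : ℚ)| ≠ 0 := abs_ne_zero.mpr hce
  rw [div_sub_one hce, abs_div, div_le_div_iff₀ (by positivity) (abs_pos.mpr hce),
    one_mul]
  have : ((a : ℚ) - (c : ℚ) * (e : ℚ)) = ((a - c * e : ℤ) : ℚ) := by push_cast; ring
  rw [this]
  calc |(c : ℚ) * (e : ℚ)| = 1 * |(c : ℚ) * (e : ℚ)| := (one_mul _).symm
    _ ≤ |((a - c * e : ℤ) : ℚ)| * |(c : ℚ) * (e : ℚ)| := by
        apply mul_le_mul_of_nonneg_right _ (abs_nonneg _)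
        exact one_le_abs_ratCast _ (sub_ne_zero.mpr h)

/-- For nonzero integers `X₁,…,X₅` with `(X₁, X₂) ≠ (X₃X₅, X₄X₅)`, one has
`max(|X₁/(X₃X₅) − 1|, |X₂/(X₄X₅) − 1|)² · |X₃²X₄²X₅³| ≥ 1` in `ℚ`. -/
theorem delPezzo7_liouville_best (X₁ X₂ X₃ X₄ X₅ : ℤ)
    (h₁ : X₁ ≠ 0) (h₂ : X₂ ≠ 0) (h₃ : X₃ ≠ 0) (h₄ : X₄ ≠ 0) (h₅ : X₅ ≠ 0)
    (hne : ¬(X₁ = X₃ * X₅ ∧ X₂ = X₄ * X₅)) :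
    1 ≤ (max |(X₁ : ℚ) / ((X₃ : ℚ) * (X₅ : ℚ)) - 1|
            |(X₂ : ℚ) / ((X₄ : ℚ) * (X₅ : ℚ)) - 1|) ^ 2 *
        |(X₃ : ℚ) ^ 2 * (X₄ : ℚ) ^ 2 * (X₅ : ℚ) ^ 3| := by
  have q3 : ((X₃ : ℚ)) ≠ 0 := Int.cast_ne_zero.mpr h₃
  have q4 : ((X₄ : ℚ)) ≠ 0 := Int.cast_ne_zero.mpr h₄
  have q5 : ((X₅ : ℚ)) ≠ 0 := Int.cast_ne_zero.mpr h₅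
  have a3 : (1 : ℚ) ≤ |(X₃ : ℚ)| := one_le_abs_ratCast _ h₃
  have a4 : (1 : ℚ) ≤ |(X₄ : ℚ)| := one_le_abs_ratCast _ h₄
  have a5 : (1 : ℚ) ≤ |(X₅ : ℚ)| := one_le_abs_ratCast _ h₅
  set M := max |(X₁ : ℚ) / ((X₃ : ℚ) * (X₅ : ℚ)) - 1|
            |(X₂ : ℚ) / ((X₄ : ℚ) * (X₅ : ℚ)) - 1| with hM
  have hMnn : 0 ≤ M := le_trans (abs_nonneg _) (le_max_left _ _)
  have habsH : |(X₃ : ℚ) ^ 2 * (X₄ : ℚ) ^ 2 * (X₅ : ℚ) ^ 3|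
      = |(X₃ : ℚ)| ^ 2 * |(X₄ : ℚ)| ^ 2 * |(X₅ : ℚ)| ^ 3 := by
    rw [abs_mul, abs_mul, abs_pow, abs_pow, abs_pow]
  rcases not_and_or.mp hne with h | h
  · have hb : 1 / |(X₃ : ℚ) * (X₅ : ℚ)| ≤ M :=
      le_trans (coord_bound X₁ X₃ X₅ h₃ h₅ h) (le_max_left _ _)
    have hpos : 0 < |(X₃ : ℚ) * (X₅ : ℚ)| := abs_pos.mpr (mul_ne_zero q3 q5)
    have hsq : (1 / |(X₃ : ℚ) * (X₅ : ℚ)|) ^ 2 ≤ M ^ 2 := by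
      apply pow_le_pow_left₀ (by positivity) hb
    calc (1 : ℚ) ≤ |(X₄ : ℚ)| ^ 2 * |(X₅ : ℚ)| := by nlinarith [abs_nonneg ((X₄:ℚ)), abs_nonneg ((X₅:ℚ))]
      _ = (1 / |(X₃ : ℚ) * (X₅ : ℚ)|) ^ 2 * (|(X₃ : ℚ)| ^ 2 * |(X₄ : ℚ)| ^ 2 * |(X₅ : ℚ)| ^ 3) := by
          rw [abs_mul]; field_simp
      _ ≤ M ^ 2 * (|(X₃ : ℚ)| ^ 2 * |(X₄ : ℚ)| ^ 2 * |(X₅ : ℚ)| ^ 3) := by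
          apply mul_le_mul_of_nonneg_right hsq (by positivity)
      _ = M ^ 2 * |(X₃ : ℚ) ^ 2 * (X₄ : ℚ) ^ 2 * (X₅ : ℚ) ^ 3| := by rw [habsH]
  · have hb : 1 / |(X₄ : ℚ) * (X₅ : ℚ)| ≤ M :=
      le_trans (coord_bound X₂ X₄ X₅ h₄ h₅ h) (le_max_right _ _)
    have hpos : 0 < |(X₄ : ℚ) * (X₅ : ℚ)| := abs_pos.mpr (mul_ne_zero q4 q5)
    have hsq : (1 / |(X₄ : ℚ) * (X₅ : ℚ)|) ^ 2 ≤ M ^ 2 := by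
      apply pow_le_pow_left₀ (by positivity) hb
    calc (1 : ℚ) ≤ |(X₃ : ℚ)| ^ 2 * |(X₅ : ℚ)| := by nlinarith [abs_nonneg ((X₃:ℚ)), abs_nonneg ((X₅:ℚ))]
      _ = (1 / |(X₄ : ℚ) * (X₅ : ℚ)|) ^ 2 * (|(X₃ : ℚ)| ^ 2 * |(X₄ : ℚ)| ^ 2 * |(X₅ : ℚ)| ^ 3) := by
          rw [abs_mul]; field_simp
      _ ≤ M ^ 2 * (|(X₃ : ℚ)| ^ 2 * |(X₄ : ℚ)| ^ 2 * |(X₅ : ℚ)| ^ 3) := by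
          apply mul_le_mul_of_nonneg_right hsq (by positivity)
      _ = M ^ 2 * |(X₃ : ℚ) ^ 2 * (X₄ : ℚ) ^ 2 * (X₅ : ℚ) ^ 3| := by rw [habsH]
end

section
/- Let X₁, X₂, X₃, X₄, X₅ be nonzero integers such that X₁ ≠ X₃X₅ and X₂ ≠ X₄X₅. Then max(|X₁/(X₃X₅) − 1|, |X₂/(X₄X₅) − 1|)³ · |X₃² X₄² X₅³| ≥ 1, where |·| is the usual absolute value on ℚ. -/
/-- For nonzero integers `X₁,…,X₅` with `X₁ ≠ X₃X₅` and `X₂ ≠ X₄X₅`, one has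
`max(|X₁/(X₃X₅) − 1|, |X₂/(X₄X₅) − 1|)³ · |X₃²X₄²X₅³| ≥ 1` in `ℚ`. -/
theorem delPezzo7_liouville_generic (X₁ X₂ X₃ X₄ X₅ : ℤ)
    (h₁ : X₁ ≠ 0) (h₂ : X₂ ≠ 0) (h₃ : X₃ ≠ 0) (h₄ : X₄ ≠ 0) (h₅ : X₅ ≠ 0)
    (hne₁ : X₁ ≠ X₃ * X₅) (hne₂ : X₂ ≠ X₄ * X₅) :
    1 ≤ (max |(X₁ : ℚ) / ((X₃ : ℚ) * (X₅ : ℚ)) - 1|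
            |(X₂ : ℚ) / ((X₄ : ℚ) * (X₅ : ℚ)) - 1|) ^ 3 *
        |(X₃ : ℚ) ^ 2 * (X₄ : ℚ) ^ 2 * (X₅ : ℚ) ^ 3| := by
  have h3q : (X₃ : ℚ) ≠ 0 := Int.cast_ne_zero.mpr h₃
  have h4q : (X₄ : ℚ) ≠ 0 := Int.cast_ne_zero.mpr h₄
  have h5q : (X₅ : ℚ) ≠ 0 := Int.cast_ne_zero.mpr h₅
  set A : ℚ := |(X₁ : ℚ) - (X₃ : ℚ) * (X₅ : ℚ)| with hAdef
  set B : ℚ := |(X₂ : ℚ) - (X₄ : ℚ) * (X₅ : ℚ)| with hBdef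
  set u : ℚ := |(X₃ : ℚ) * (X₅ : ℚ)| with hudef
  set v : ℚ := |(X₄ : ℚ) * (X₅ : ℚ)| with hvdef
  have hu : 0 < u := abs_pos.mpr (mul_ne_zero h3q h5q)
  have hv : 0 < v := abs_pos.mpr (mul_ne_zero h4q h5q)
  have hA : (1 : ℚ) ≤ A := by
    have := Int.one_le_abs (sub_ne_zero.mpr hne₁)
    rw [hAdef]; exact_mod_cast this
  have hB : (1 : ℚ) ≤ B := by
    have := Int.one_le_abs (sub_ne_zero.mpr hne₂)
    rw [hBdef]; exact_mod_cast this
  have e1 : |(X₁ : ℚ) / ((X₃ : ℚ) * (X₅ : ℚ)) - 1| = A / u := by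
    rw [hAdef, hudef, ← abs_div]
    congr 1
    field_simp
  have e2 : |(X₂ : ℚ) / ((X₄ : ℚ) * (X₅ : ℚ)) - 1| = B / v := by
    rw [hBdef, hvdef, ← abs_div]
    congr 1
    field_simp
  set d : ℚ := max |(X₁ : ℚ) / ((X₃ : ℚ) * (X₅ : ℚ)) - 1|
      |(X₂ : ℚ) / ((X₄ : ℚ) * (X₅ : ℚ)) - 1| with hddef
  have hd1 : A ≤ d * u := by
    have : A / u ≤ d := e1 ▸ le_max_left _ _
    exact (div_le_iff₀ hu).mp this
  have hd2 : B ≤ d * v := by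
    have : B / v ≤ d := e2 ▸ le_max_right _ _
    exact (div_le_iff₀ hv).mp this
  have hd0 : 0 ≤ d := le_trans (abs_nonneg _) (le_max_left _ _)
  have hW : |(X₃ : ℚ) ^ 2 * (X₄ : ℚ) ^ 2 * (X₅ : ℚ) ^ 3| = |(X₃ : ℚ)| * (u * v ^ 2) := by
    rw [hudef, hvdef, abs_mul, abs_mul, abs_mul, abs_mul]
    rw [abs_pow, abs_pow, abs_pow]
    ring
  have hX3 : (1 : ℚ) ≤ |(X₃ : ℚ)| := by
    have := Int.one_le_abs h₃
    exact_mod_cast this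
  rw [hW]
  have key : (1 : ℚ) ≤ d ^ 3 * (u * v ^ 2) := by
    have h1 : (1 : ℚ) ≤ A * (B * B) := by nlinarith
    have h2 : A * (B * B) ≤ (d * u) * ((d * v) * (d * v)) :=
      mul_le_mul hd1 (mul_le_mul hd2 hd2 (le_trans zero_le_one hB) (by positivity))
        (by positivity) (by positivity)
    nlinarith
  nlinarith [mul_le_mul hX3 key zero_le_one (abs_nonneg ((X₃ : ℚ)))]
end

section
/- Let n ≥ 1 and r ≥ 1 be integers, and let ρ₁,…,ρ_{n+r} ∈ ℤⁿ be such that ρ₁,…,ρ_n form a ℤ-basis of ℤⁿ. Let h : Hom_ℤ(ℤⁿ, ℤ) → ℤ^{n+r} be the linear map h(m) = (m(ρ₁),…,m(ρ_{n+r})), and for v ∈ ℤ^{n+r} write [v] for its class in the cokernel ℤ^{n+r}/im(h); let e₁,…,e_{n+r} denote the standard basis of ℤ^{n+r}. Then for any integers a_{i,j} (1 ≤ i ≤ n, 1 ≤ j ≤ r), the following are equivalent: (i) [e_i] = Σ_{j=1}^{r} a_{i,j}[e_{n+j}] in the cokernel for every 1 ≤ i ≤ n; (ii) ρ_{n+j}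 = −Σ_{i=1}^{n} a_{i,j} ρ_i in ℤⁿ for every 1 ≤ j ≤ r. -/
/-- Lattice form of the equivalence underlying Hypothesis (*) ⇔ Hypothesis (**):
given rays `ρ₁,…,ρ_{n+r} ∈ ℤⁿ` whose first `n` members form a `ℤ`-basis, with
`h : Hom(ℤⁿ,ℤ) → ℤ^{n+r}`, `h(m) = (m(ρ_k))_k`, and `[v]` the class of `v` in the
cokernel `ℤ^{n+r}/im(h)`, the relations `[e_i] = Σ_j a_{i,j}[e_{n+j}]` (for all `i ≤ n`)
hold if and only if `ρ_{n+j} = −Σ_i a_{i,j} ρ_i` (for all `j ≤ r`). -/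
theorem picard_relations_iff_ray_relations (n r : ℕ) (hn : 1 ≤ n) (hr : 1 ≤ r)
    (ρ : Fin (n + r) → (Fin n → ℤ))
    (B : Module.Basis (Fin n) ℤ (Fin n → ℤ)) (hB : ∀ i : Fin n, B i = ρ (Fin.castAdd r i))
    (a : Fin n → Fin r → ℤ) :
    (∀ i : Fin n,
        (Submodule.Quotient.mk (Pi.single (Fin.castAdd r i) (1 : ℤ)) :
          (Fin (n + r) → ℤ) ⧸
            LinearMap.range
              (LinearMap.pi (fun k : Fin (n + r) =>
                (LinearMap.applyₗ (ρ k) : ((Fin n → ℤ) →ₗ[ℤ] ℤ) →ₗ[ℤ] ℤ))))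
          = ∑ j : Fin r,
              a i j • Submodule.Quotient.mk (Pi.single (Fin.natAdd n j) (1 : ℤ)))
      ↔ (∀ j : Fin r,
          ρ (Fin.natAdd n j) = - ∑ i : Fin n, a i j • ρ (Fin.castAdd r i)) := by
  set h : ((Fin n → ℤ) →ₗ[ℤ] ℤ) →ₗ[ℤ] (Fin (n + r) → ℤ) :=
    LinearMap.pi (fun k : Fin (n + r) =>
      (LinearMap.applyₗ (ρ k) : ((Fin n → ℤ) →ₗ[ℤ] ℤ) →ₗ[ℤ] ℤ)) with hh
  set p := LinearMap.range h with hp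
  have hcn : ∀ (i : Fin n) (j : Fin r), Fin.castAdd r i ≠ Fin.natAdd n j := by
    intro i j hij
    have := congrArg Fin.val hij
    simp [Fin.castAdd, Fin.natAdd] at this
    omega
  -- the difference vector
  set v : Fin n → Fin (n + r) → ℤ := fun i =>
    Pi.single (Fin.castAdd r i) (1 : ℤ)
      - ∑ j : Fin r, a i j • Pi.single (Fin.natAdd n j) (1 : ℤ) with hv
  have ev1 : ∀ (i i' : Fin n), v i (Fin.castAdd r i') = if i' = i then 1 else 0 := by
    intro i i'
    simp only [hv, Pi.sub_apply, Finset.sum_apply, Pi.smul_apply, Pi.single_apply]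
    rw [Finset.sum_eq_zero]
    · simp [Fin.castAdd_inj, eq_comm]
    · intro j _
      simp [(hcn i' j)]
  have hnn : ∀ (j b : Fin r), Fin.natAdd n j = Fin.natAdd n b ↔ j = b := by
    intro j b
    constructor
    · intro e
      have := congrArg Fin.val e
      simp [Fin.natAdd] at this
      exact Fin.ext (by omega)
    · rintro rfl; rfl
  have ev2 : ∀ (i : Fin n) (j : Fin r), v i (Fin.natAdd n j) = - a i j := by
    intro i j
    simp only [hv, Pi.sub_apply, Finset.sum_apply, Pi.smul_apply, Pi.single_apply]
    rw [if_neg (Ne.symm (hcn i j)), Finset.sum_eq_single j]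
    · simp
    · intro b _ hb
      rw [if_neg (fun e => hb ((hnn j b).mp e).symm), smul_zero]
    · intro hj; exact absurd (Finset.mem_univ j) hj
  have coordsum : ∀ (j : Fin r) (i : Fin n),
      B.repr (∑ i' : Fin n, a i' j • ρ (Fin.castAdd r i')) i = a i j := by
    intro j i
    rw [map_sum, Finsupp.finset_sum_apply, Finset.sum_eq_single i]
    · rw [← hB, map_smul, Finsupp.smul_apply, Module.Basis.repr_self, Finsupp.single_apply,
        if_pos rfl, smul_eq_mul, mul_one]
    · intro b _ hb
      rw [← hB, map_smul, Finsupp.smul_apply, Module.Basis.repr_self, Finsupp.single_apply,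
        if_neg hb, smul_zero]
    · intro hi; exact absurd (Finset.mem_univ i) hi
  have mem_iff : ∀ i : Fin n,
      ((Submodule.Quotient.mk (Pi.single (Fin.castAdd r i) (1 : ℤ)) :
        (Fin (n + r) → ℤ) ⧸ p)
          = ∑ j : Fin r, a i j • Submodule.Quotient.mk (Pi.single (Fin.natAdd n j) (1 : ℤ)))
        ↔ ∃ m : (Fin n → ℤ) →ₗ[ℤ] ℤ, h m = v i := by
    intro i
    have : (∑ j : Fin r, a i j • (Submodule.Quotient.mk (Pi.single (Fin.natAdd n j) (1 : ℤ)) :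
        (Fin (n + r) → ℤ) ⧸ p))
        = Submodule.Quotient.mk (∑ j : Fin r, a i j • Pi.single (Fin.natAdd n j) (1 : ℤ)) := by
      simp only [← Submodule.mkQ_apply, ← map_smul, ← map_sum]
    rw [this, Submodule.Quotient.eq]
    rfl
  have happly : ∀ (m : (Fin n → ℤ) →ₗ[ℤ] ℤ) (k : Fin (n + r)), h m k = m (ρ k) := by
    intro m k; simp [hh]
  constructor
  · intro H j
    apply B.ext_elem
    intro i
    obtain ⟨m, hm⟩ := (mem_iff i).mp (H i)
    have hmB : m = B.coord i := by
      apply B.ext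
      intro i'
      have := congrFun hm (Fin.castAdd r i')
      rw [happly, ← hB] at this
      rw [this, ev1, Module.Basis.coord_apply, Module.Basis.repr_self, Finsupp.single_apply]
    have h1 : B.repr (ρ (Fin.natAdd n j)) i = - a i j := by
      have := congrFun hm (Fin.natAdd n j)
      rw [happly, hmB, ev2, Module.Basis.coord_apply] at this
      exact this
    rw [h1, map_neg, Finsupp.neg_apply, coordsum]
  · intro H i
    rw [mem_iff]
    refine ⟨B.coord i, ?_⟩
    funext k
    rw [happly]
    refine Fin.addCases (fun i' => ?_) (fun j => ?_) k
    · rw [← hB, ev1, Module.Basis.coord_apply, Module.Basis.repr_self, Finsupp.single_apply]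
    · rw [H j, ev2, Module.Basis.coord_apply, map_neg, Finsupp.neg_apply, coordsum]
end

section
/- Let p be a prime number, let r ≥ 1 and β ≥ 1 be integers, let b₁,…,b_r, d₁,…,d_r, c₁,…,c_r be natural numbers with d_j ≥ β·b_j for every j, and let c be a natural number with c ≥ β. Let X₁,…,X_r and Y be nonzero integers such that z := (∏_{j=1}^{r} X_j^{b_j}) − Y ≠ 0. Then |z|_p^{β} · max(∏_{j=1}^{r} |X_j|^{d_j}, |Y|^{c} · ∏_{j=1}^{r} |X_j|^{c_j}) ≥ 2^{−β}, where |·|_p is the p-adic absolute value normalized by |p|_p = 1/p and |·| is the usual absolute value. -/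
/-- Non-archimedean Liouville-type estimate over `ℚ`: for a prime `p`, exponents with
`d_j ≥ β·b_j` and `c ≥ β`, nonzero integers `X₁,…,X_r, Y` with
`z = ∏_j X_j^{b_j} − Y ≠ 0`, one has
`|z|_p^β · max(∏_j |X_j|^{d_j}, |Y|^c·∏_j |X_j|^{c_j}) ≥ 2^{−β}`. -/
theorem toric_liouville_nonarchimedean (p : ℕ) (hp : p.Prime) (r β : ℕ)
    (hr : 1 ≤ r) (hβ : 1 ≤ β) (b d c' : Fin r → ℕ) (c : ℕ)
    (hd : ∀ j, β * b j ≤ d j) (hc : β ≤ c)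
    (X : Fin r → ℤ) (hX : ∀ j, X j ≠ 0) (Y : ℤ) (hY : Y ≠ 0)
    (hz : (∏ j, X j ^ b j) - Y ≠ 0) :
    1 / (2 : ℚ) ^ β ≤
      (padicNorm p (((∏ j, X j ^ b j) - Y : ℤ) : ℚ)) ^ β *
        max (∏ j, (|(X j : ℚ)|) ^ d j) ((|(Y : ℚ)|) ^ c * ∏ j, (|(X j : ℚ)|) ^ c' j) := by
  haveI : Fact p.Prime := ⟨hp⟩
  set z : ℤ := (∏ j, X j ^ b j) - Y with hzdef
  have hzQ : ((z : ℚ)) ≠ 0 := Int.cast_ne_zero.mpr hz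
  have hz1 : (1 : ℚ) ≤ |(z : ℚ)| := by exact_mod_cast Int.one_le_abs hz
  have hXj1 : ∀ j, (1 : ℚ) ≤ |(X j : ℚ)| := fun j => by
    exact_mod_cast Int.one_le_abs (hX j)
  have hY1 : (1 : ℚ) ≤ |(Y : ℚ)| := by exact_mod_cast Int.one_le_abs hY
  set A : ℚ := ∏ j, |(X j : ℚ)| ^ b j with hAdef
  set B : ℚ := |(Y : ℚ)| with hBdef
  have hA1 : (1 : ℚ) ≤ A := by
    rw [hAdef]
    calc (1 : ℚ) = ∏ _j : Fin r, 1 := by simp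
      _ ≤ ∏ j, |(X j : ℚ)| ^ b j :=
        Finset.prod_le_prod (fun j _ => zero_le_one) fun j _ => one_le_pow₀ (hXj1 j)
  set M : ℚ := max A B with hMdef
  have hM1 : (1 : ℚ) ≤ M := le_trans hA1 (le_max_left _ _)
  have hMpos : (0 : ℚ) < M := lt_of_lt_of_le one_pos hM1
  -- |z| ≤ 2M
  have hzle : |(z : ℚ)| ≤ 2 * M := by
    have habsprod : |((∏ j, X j ^ b j : ℤ) : ℚ)| = A := by
      push_cast
      rw [Finset.abs_prod]
      simp [abs_pow, hAdef]
    have hzc : (z : ℚ) = ((∏ j, X j ^ b j : ℤ) : ℚ) - (Y : ℚ) := by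
      rw [hzdef]; push_cast; ring
    have : |(z : ℚ)| ≤ A + B := by
      rw [hzc]
      exact (abs_sub _ _).trans (le_of_eq (by rw [habsprod]))
    refine this.trans ?_
    have : A + B ≤ M + M := add_le_add (le_max_left _ _) (le_max_right _ _)
    linarith
  -- padicNorm lower bound
  have hkey : 1 / |(z : ℚ)| ≤ padicNorm p (z : ℚ) := by
    have hv : padicNorm p (z : ℚ) = (p : ℚ) ^ (-(padicValInt p z : ℤ)) := by
      rw [padicNorm.eq_zpow_of_nonzero hzQ, padicValRat.of_int]
    have hdvd : (p : ℤ) ^ padicValInt p z ∣ z := padicValInt_dvd _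
    have hple : ((p : ℚ)) ^ (padicValInt p z) ≤ |(z : ℚ)| := by
      have h2 : (p : ℤ) ^ padicValInt p z ≤ |z| :=
        Int.le_of_dvd (abs_pos.mpr hz) ((dvd_abs _ z).mpr hdvd)
      exact_mod_cast h2
    rw [hv]
    have hppos : (0 : ℚ) < (p : ℚ) ^ (padicValInt p z) :=
      pow_pos (by exact_mod_cast hp.pos) _
    rw [zpow_neg, zpow_natCast]
    rw [div_le_iff₀ (lt_of_lt_of_le one_pos hz1), inv_mul_eq_div, le_div_iff₀ hppos]
    simpa using hple
  have hkey2 : 1 / (2 * M) ≤ padicNorm p (z : ℚ) := by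
    refine le_trans ?_ hkey
    apply one_div_le_one_div_of_le (lt_of_lt_of_le one_pos hz1) hzle
  -- max term lower bound
  have hmax : M ^ β ≤ max (∏ j, (|(X j : ℚ)|) ^ d j)
      ((|(Y : ℚ)|) ^ c * ∏ j, (|(X j : ℚ)|) ^ c' j) := by
    rcases le_total B A with h | h
    · have hMA : M = A := max_eq_left h
      refine le_max_of_le_left ?_
      rw [hMA, hAdef, ← Finset.prod_pow]
      refine Finset.prod_le_prod (fun j _ => by positivity) fun j _ => ?_
      rw [← pow_mul]
      exact pow_le_pow_right₀ (hXj1 j) (by rw [mul_comm]; exact hd j)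
    · have hMB : M = B := max_eq_right h
      refine le_max_of_le_right ?_
      rw [hMB, hBdef]
      calc |(Y : ℚ)| ^ β ≤ |(Y : ℚ)| ^ c := pow_le_pow_right₀ hY1 hc
        _ ≤ |(Y : ℚ)| ^ c * ∏ j, |(X j : ℚ)| ^ c' j := by
            nth_rewrite 1 [← mul_one (|(Y : ℚ)| ^ c)]
            refine mul_le_mul_of_nonneg_left ?_ (by positivity)
            calc (1 : ℚ) = ∏ _j : Fin r, 1 := by simp
              _ ≤ ∏ j, |(X j : ℚ)| ^ c' j :=
                Finset.prod_le_prod (fun j _ => zero_le_one) fun j _ => one_le_pow₀ (hXj1 j)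
  -- combine
  have h1 : (1 / (2 * M)) ^ β ≤ (padicNorm p (z : ℚ)) ^ β :=
    pow_le_pow_left₀ (div_nonneg zero_le_one (by linarith)) hkey2 β
  calc 1 / (2 : ℚ) ^ β = (1 / (2 * M)) ^ β * M ^ β := by
        rw [← mul_pow]
        have hMne : M ≠ 0 := ne_of_gt hMpos
        have h12 : 1 / (2 * M) * M = 1 / 2 := by field_simp
        rw [h12, div_pow, one_pow]
    _ ≤ (padicNorm p (z : ℚ)) ^ β * M ^ β :=
        mul_le_mul_of_nonneg_right h1 (pow_nonneg hMpos.le β)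
    _ ≤ _ := mul_le_mul_of_nonneg_left hmax (pow_nonneg (padicNorm.nonneg _) _)
end
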